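/- arXiv:2605.00079 — 3 statements merged into one kernel-verified Lean document; each statement's English description precedes it below -/
import Mathlib

section
/- The map sending an n×n magog matrix (a_{i,j}) to the (n+1)×(n+1) matrix (c_{i,j}) with c_{i,j} = Σ_{i'≤i, j'≤j} a_{i',j'} is a bijection from n×n magog matrices to magog corner-sum matrices of order n. -/
open Finset

/-- Partial row sum: sum of entries `a i j'` over (0-indexed) columns `j' < j`,
i.e. the 1-indexed partial row sum through column `j`. -/
def rowPS {n : ℕ} (a : Matrix (Fin n) (Fin n) ℤ) (i : Fin n) (j : ℕ) : ℤ :=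
  ∑ j' ∈ Finset.univ.filter (fun j' : Fin n => (j' : ℕ) < j), a i j'

/-- Partial column sum: sum of entries `a i' j` over (0-indexed) rows `i' < i`,
i.e. the 1-indexed partial column sum through row `i`. -/
def colPS {n : ℕ} (a : Matrix (Fin n) (Fin n) ℤ) (i : ℕ) (j : Fin n) : ℤ :=
  ∑ i' ∈ Finset.univ.filter (fun i' : Fin n => (i' : ℕ) < i), a i' j

/-- An `n × n` square sign matrix. -/
def IsSquareSign (n : ℕ) (a : Matrix (Fin n) (Fin n) ℤ) : Prop :=
  (∀ i j, a i j = 0 ∨ a i j = 1 ∨ a i j = -1) ∧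
  (∀ i, ∑ j, a i j = 1) ∧
  (∀ j, ∑ i, a i j = 1) ∧
  (∀ (i : ℕ) (j : Fin n), colPS a i j = 0 ∨ colPS a i j = 1) ∧
  (∀ (i : Fin n) (j : ℕ), 0 ≤ rowPS a i j)

/-- A magog matrix: a square sign matrix satisfying the special inequalities.
Here `i j : ℕ` are 0-indexed, so `i + 2 < n` corresponds to the 1-indexed
range `1 ≤ i ≤ n - 2`; the 1-indexed row `i+1` is the `Fin n` index `i`, etc. -/
def IsMagog (n : ℕ) (a : Matrix (Fin n) (Fin n) ℤ) : Prop :=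
  IsSquareSign n a ∧
  ∀ (i j : ℕ) (hi : i + 2 < n) (hj : j + 2 < n),
    0 ≤ rowPS a ⟨i + 1, by omega⟩ (j + 1) + colPS a (i + 2) ⟨j + 1, by omega⟩
        - colPS a (i + 1) ⟨j, by omega⟩
/-- A magog corner-sum matrix of order `n`, indexed by `0 ≤ i, j ≤ n`. -/
def IsMagogCSM (n : ℕ) (c : Fin (n + 1) → Fin (n + 1) → ℤ) : Prop :=
  (∀ k : Fin (n + 1), c 0 k = 0 ∧ c k 0 = 0) ∧
  (∀ k : Fin (n + 1), c (Fin.last n) k = (k : ℕ) ∧ c k (Fin.last n) = (k : ℕ)) ∧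
  (∀ (i : Fin (n + 1)) (j : ℕ) (hj : j < n),
      c i ⟨j + 1, by omega⟩ - c i ⟨j, by omega⟩ = 0 ∨
      c i ⟨j + 1, by omega⟩ - c i ⟨j, by omega⟩ = 1) ∧
  (∀ (i : ℕ) (hi : i < n) (j : Fin (n + 1)),
      c ⟨i, by omega⟩ j ≤ c ⟨i + 1, by omega⟩ j) ∧
  (∀ (i j : ℕ) (hi : i + 2 ≤ n) (hj : j + 2 ≤ n),
      2 * c ⟨i + 1, by omega⟩ ⟨j + 1, by omega⟩ ≤
        c ⟨i + 2, by omega⟩ ⟨j + 2, by omega⟩ + c ⟨i + 1, by omega⟩ ⟨j, by omega⟩)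

/-- The corner-sum map: `cornerOf a i j = ∑_{i' ≤ i, j' ≤ j} a_{i',j'}` (1-indexed). -/
def cornerOf {n : ℕ} (a : Matrix (Fin n) (Fin n) ℤ) : Fin (n + 1) → Fin (n + 1) → ℤ :=
  fun i j => ∑ i' ∈ Finset.univ.filter (fun i' : Fin n => (i' : ℕ) < (i : ℕ)),
      ∑ j' ∈ Finset.univ.filter (fun j' : Fin n => (j' : ℕ) < (j : ℕ)), a i' j'

/-!
Corner sums and mixed second differences are inverse to each other, so `cornerOf` is injective
and its image consists of all matrices vanishing on the top row and left column. The horizontal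
and vertical differences of `cornerOf a` are the partial column and row sums of `a`, so each
axiom of a magog corner-sum matrix is a magog condition read on the indices `i, j ≤ n`. Outside
that range the partial sums are full row or column sums, equal to `1`; the entry condition
follows from the partial column sums lying in `{0, 1}`; and the special inequalities on the last
row and column, which only the corner-sum side demands, follow from the remaining conditions.
-/

namespace Fin

theorem sum_filter_val_lt_succ {M : Type*} [AddCommMonoid M] {n i : ℕ} (f : Fin n → M)
    (hi : i < n) :
    ∑ x ∈ univ.filter (fun x : Fin n => (x : ℕ) < i + 1), f x
      = ∑ x ∈ univ.filter (fun x : Fin n => (x : ℕ) < i), f x + f ⟨i, hi⟩ := by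
  have : univ.filter (fun x : Fin n => (x : ℕ) < i + 1)
      = insert ⟨i, hi⟩ (univ.filter (fun x : Fin n => (x : ℕ) < i)) := by
    ext x
    simp only [mem_filter, mem_insert, mem_univ, true_and, Fin.ext_iff]
    omega
  rw [this, sum_insert (by simp), add_comm]

theorem filter_val_lt_of_le {n i : ℕ} (h : n ≤ i) :
    univ.filter (fun x : Fin n => (x : ℕ) < i) = univ :=
  filter_true_of_mem fun x _ => x.isLt.trans_le h

end Fin

section PartialSums

variable {n : ℕ} (a : Matrix (Fin n) (Fin n) ℤ)

theorem rowPS_succ (i : Fin n) {j : ℕ} (hj : j < n) :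
    rowPS a i (j + 1) = rowPS a i j + a i ⟨j, hj⟩ :=
  Fin.sum_filter_val_lt_succ (a i) hj

theorem rowPS_of_le (i : Fin n) {j : ℕ} (hj : n ≤ j) : rowPS a i j = ∑ j', a i j' := by
  rw [rowPS, Fin.filter_val_lt_of_le hj]

theorem colPS_succ {i : ℕ} (hi : i < n) (j : Fin n) :
    colPS a (i + 1) j = colPS a i j + a ⟨i, hi⟩ j :=
  Fin.sum_filter_val_lt_succ (a · j) hi

theorem colPS_of_le {i : ℕ} (hi : n ≤ i) (j : Fin n) : colPS a i j = ∑ i', a i' j := by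
  rw [colPS, Fin.filter_val_lt_of_le hi]

/-- `cornerOf a` with its indices read in `ℕ`; it stays constant beyond `n`. -/
def cornerSum (i j : ℕ) : ℤ :=
  ∑ i' ∈ univ.filter (fun i' : Fin n => (i' : ℕ) < i),
    ∑ j' ∈ univ.filter (fun j' : Fin n => (j' : ℕ) < j), a i' j'

theorem cornerOf_apply (i j : Fin (n + 1)) : cornerOf a i j = cornerSum a i j := rfl

@[simp]
theorem cornerSum_zero_left (j : ℕ) : cornerSum a 0 j = 0 := by
  simp [cornerSum]

@[simp]
theorem cornerSum_zero_right (i : ℕ) : cornerSum a i 0 = 0 := by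
  simp [cornerSum]

theorem cornerSum_succ_left {i : ℕ} (hi : i < n) (j : ℕ) :
    cornerSum a (i + 1) j = cornerSum a i j + rowPS a ⟨i, hi⟩ j :=
  Fin.sum_filter_val_lt_succ _ hi

theorem cornerSum_succ_right (i : ℕ) {j : ℕ} (hj : j < n) :
    cornerSum a i (j + 1) = cornerSum a i j + colPS a i ⟨j, hj⟩ := by
  simp only [cornerSum, colPS, Fin.sum_filter_val_lt_succ _ hj, sum_add_distrib]

end PartialSums

section DiffMatrix

variable {n : ℕ}

/-- The inverse of `cornerOf`: mixed second differences. -/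
def diffMatrix (c : Fin (n + 1) → Fin (n + 1) → ℤ) : Matrix (Fin n) (Fin n) ℤ :=
  fun i j => c i.succ j.succ - c i.castSucc j.succ - c i.succ j.castSucc + c i.castSucc j.castSucc

theorem diffMatrix_cornerOf (a : Matrix (Fin n) (Fin n) ℤ) : diffMatrix (cornerOf a) = a := by
  ext i j
  simp only [diffMatrix, cornerOf_apply, Fin.val_succ, Fin.val_castSucc,
    cornerSum_succ_right a _ j.isLt, colPS_succ a i.isLt]
  ring

theorem cornerOf_injective : Function.Injective (cornerOf : Matrix (Fin n) (Fin n) ℤ → _) :=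
  Function.LeftInverse.injective diffMatrix_cornerOf

theorem eq_of_diffMatrix_eq {c c' : Fin (n + 1) → Fin (n + 1) → ℤ}
    (hc : ∀ k, c 0 k = 0 ∧ c k 0 = 0) (hc' : ∀ k, c' 0 k = 0 ∧ c' k 0 = 0)
    (h : diffMatrix c = diffMatrix c') : c = c' := by
  funext i j
  induction i using Fin.induction generalizing j with
  | zero => rw [(hc j).1, (hc' j).1]
  | succ i ih =>
    induction j using Fin.induction with
    | zero => rw [(hc _).2, (hc' _).2]
    | succ j ihj =>
      have hij := congrFun (congrFun h i) j
      simp only [diffMatrix] at hij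
      linarith [ih j.castSucc, ih j.succ]

theorem cornerOf_diffMatrix {c : Fin (n + 1) → Fin (n + 1) → ℤ}
    (hc : ∀ k, c 0 k = 0 ∧ c k 0 = 0) : cornerOf (diffMatrix c) = c :=
  eq_of_diffMatrix_eq (fun _ => ⟨cornerSum_zero_left _ _, cornerSum_zero_right _ _⟩) hc
    (diffMatrix_cornerOf _)

end DiffMatrix

theorem Int.forall_le_eq_natCast_iff {f : ℕ → ℤ} (h0 : f 0 = 0) (n : ℕ) :
    (∀ k ≤ n, f k = k) ↔ ∀ k < n, f (k + 1) = f k + 1 := by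
  refine ⟨fun h k hk => by rw [h k hk.le, h (k + 1) hk]; push_cast; rfl, fun h k hk => ?_⟩
  induction k with
  | zero => simpa using h0
  | succ k ih => rw [h k hk, ih (by omega)]; push_cast; rfl

section Magog

variable {n : ℕ} (a : Matrix (Fin n) (Fin n) ℤ)

theorem isMagogCSM_cornerOf_iff_cornerSum : IsMagogCSM n (cornerOf a) ↔
    (∀ k ≤ n, cornerSum a n k = k ∧ cornerSum a k n = k) ∧
    (∀ i ≤ n, ∀ j < n, cornerSum a i (j + 1) - cornerSum a i j = 0 ∨
      cornerSum a i (j + 1) - cornerSum a i j = 1) ∧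
    (∀ i < n, ∀ j ≤ n, cornerSum a i j ≤ cornerSum a (i + 1) j) ∧
    (∀ i j, i + 2 ≤ n → j + 2 ≤ n →
      2 * cornerSum a (i + 1) (j + 1) ≤ cornerSum a (i + 2) (j + 2) + cornerSum a (i + 1) j) := by
  simp only [IsMagogCSM, cornerOf_apply, Fin.forall_iff, Fin.val_zero, Fin.val_last,
    cornerSum_zero_left, cornerSum_zero_right, Nat.lt_succ_iff, and_self, implies_true, true_and]

theorem cornerSum_last_iff :
    (∀ k ≤ n, cornerSum a n k = k ∧ cornerSum a k n = k) ↔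
      (∀ i, ∑ j, a i j = 1) ∧ ∀ j, ∑ i, a i j = 1 := by
  have hcol (k : ℕ) (hk : k < n) :
      cornerSum a n (k + 1) = cornerSum a n k + ∑ i, a i ⟨k, hk⟩ := by
    rw [cornerSum_succ_right a n hk, colPS_of_le a le_rfl]
  have hrow (k : ℕ) (hk : k < n) :
      cornerSum a (k + 1) n = cornerSum a k n + ∑ j, a ⟨k, hk⟩ j := by
    rw [cornerSum_succ_left a hk, rowPS_of_le a _ le_rfl]
  rw [forall₂_and, Int.forall_le_eq_natCast_iff (cornerSum_zero_right a n),
    Int.forall_le_eq_natCast_iff (cornerSum_zero_left a n), and_comm, Fin.forall_iff,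
    Fin.forall_iff]
  exact and_congr (forall₂_congr fun k hk => by rw [hrow k hk, add_right_inj])
    (forall₂_congr fun k hk => by rw [hcol k hk, add_right_inj])

theorem colPS_eq_zero_or_one_iff (hC : ∀ j, ∑ i, a i j = 1) :
    (∀ (i : ℕ) (j : Fin n), colPS a i j = 0 ∨ colPS a i j = 1) ↔
      ∀ i ≤ n, ∀ j < n, cornerSum a i (j + 1) - cornerSum a i j = 0 ∨
        cornerSum a i (j + 1) - cornerSum a i j = 1 := by
  simp only [Fin.forall_iff] at hC ⊢
  constructor
  · intro h i _ j hj
    simpa [cornerSum_succ_right a i hj] using h i j hj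
  · intro h i j hj
    rcases le_or_gt i n with hi | hi
    · simpa [cornerSum_succ_right a i hj] using h i hi j hj
    · rw [colPS_of_le a hi.le, hC j hj]
      exact Or.inr rfl

theorem rowPS_nonneg_iff (hR : ∀ i, ∑ j, a i j = 1) :
    (∀ (i : Fin n) (j : ℕ), 0 ≤ rowPS a i j) ↔
      ∀ i < n, ∀ j ≤ n, cornerSum a i j ≤ cornerSum a (i + 1) j := by
  simp only [Fin.forall_iff] at hR ⊢
  constructor
  · intro h i hi j _
    simpa [cornerSum_succ_left a hi] using h i hi j
  · intro h i hi j
    rcases le_or_gt j n with hj | hj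
    · simpa [cornerSum_succ_left a hi] using h i hi j hj
    · rw [rowPS_of_le a _ hj.le, hR i hi]
      exact zero_le_one

theorem entry_eq_zero_or_one_or_neg_one_of_colPS
    (h : ∀ (i : ℕ) (j : Fin n), colPS a i j = 0 ∨ colPS a i j = 1) (i j : Fin n) :
    a i j = 0 ∨ a i j = 1 ∨ a i j = -1 := by
  have step : colPS a (i + 1) j = colPS a i j + a i j := colPS_succ a i.isLt j
  rcases h i j with h₀ | h₀ <;> rcases h (i + 1) j with h₁ | h₁ <;> omega

theorem cornerSum_special_eq {i j : ℕ} (hi : i + 2 ≤ n) (hj : j + 2 ≤ n) :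
    cornerSum a (i + 2) (j + 2) + cornerSum a (i + 1) j - 2 * cornerSum a (i + 1) (j + 1) =
      rowPS a ⟨i + 1, by omega⟩ (j + 1) + colPS a (i + 2) ⟨j + 1, by omega⟩
        - colPS a (i + 1) ⟨j, by omega⟩ := by
  have h₁ := cornerSum_succ_right a (i + 2) (j := j + 1) (by omega)
  have h₂ := cornerSum_succ_left a (i := i + 1) (by omega) (j + 1)
  have h₃ := cornerSum_succ_right a (i + 1) (j := j) (by omega)
  linarith

theorem magog_special_of_last_row (hC : ∀ j, ∑ i, a i j = 1)
    (hCP : ∀ (i : ℕ) (j : Fin n), colPS a i j = 0 ∨ colPS a i j = 1)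
    (hRP : ∀ (i : Fin n) (j : ℕ), 0 ≤ rowPS a i j) {i j : ℕ} (hi : i + 2 = n)
    (hj : j + 2 ≤ n) :
    0 ≤ rowPS a ⟨i + 1, by omega⟩ (j + 1) + colPS a (i + 2) ⟨j + 1, by omega⟩
      - colPS a (i + 1) ⟨j, by omega⟩ := by
  rw [colPS_of_le a hi.ge, hC]
  have := hRP ⟨i + 1, by omega⟩ (j + 1)
  rcases hCP (i + 1) ⟨j, by omega⟩ with h | h <;> omega

theorem magog_special_of_last_col (hR : ∀ i, ∑ j, a i j = 1)
    (hCP : ∀ (i : ℕ) (j : Fin n), colPS a i j = 0 ∨ colPS a i j = 1) {i j : ℕ}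
    (hi : i + 2 ≤ n) (hj : j + 2 = n) :
    0 ≤ rowPS a ⟨i + 1, by omega⟩ (j + 1) + colPS a (i + 2) ⟨j + 1, by omega⟩
      - colPS a (i + 1) ⟨j, by omega⟩ := by
  have hrow := rowPS_succ a ⟨i + 1, by omega⟩ (j := j + 1) (by omega)
  rw [rowPS_of_le a _ hj.ge, hR] at hrow
  rw [colPS_succ a (i := i + 1) (by omega)]
  rcases hCP (i + 1) ⟨j, by omega⟩ with h | h <;>
    rcases hCP (i + 1) ⟨j + 1, by omega⟩ with h' | h' <;> omega

theorem magog_special_iff (hR : ∀ i, ∑ j, a i j = 1) (hC : ∀ j, ∑ i, a i j = 1)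
    (hCP : ∀ (i : ℕ) (j : Fin n), colPS a i j = 0 ∨ colPS a i j = 1)
    (hRP : ∀ (i : Fin n) (j : ℕ), 0 ≤ rowPS a i j) :
    (∀ (i j : ℕ) (hi : i + 2 < n) (hj : j + 2 < n),
      0 ≤ rowPS a ⟨i + 1, by omega⟩ (j + 1) + colPS a (i + 2) ⟨j + 1, by omega⟩
        - colPS a (i + 1) ⟨j, by omega⟩) ↔
    ∀ i j, i + 2 ≤ n → j + 2 ≤ n →
      2 * cornerSum a (i + 1) (j + 1) ≤ cornerSum a (i + 2) (j + 2) + cornerSum a (i + 1) j := by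
  constructor
  · intro h i j hi hj
    have key := cornerSum_special_eq a hi hj
    rcases hi.lt_or_eq with hi | hi
    · rcases hj.lt_or_eq with hj | hj
      · linarith [h i j hi hj]
      · linarith [magog_special_of_last_col a hR hCP hi.le hj]
    · linarith [magog_special_of_last_row a hC hCP hRP hi hj]
  · intro h i j hi hj
    linarith [cornerSum_special_eq a hi.le hj.le, h i j hi.le hj.le]

theorem isMagogCSM_cornerOf_iff : IsMagogCSM n (cornerOf a) ↔ IsMagog n a := by
  rw [isMagogCSM_cornerOf_iff_cornerSum]
  constructor
  · rintro ⟨hlast, hcol, hrow, hspec⟩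
    obtain ⟨hR, hC⟩ := (cornerSum_last_iff a).1 hlast
    have hCP := (colPS_eq_zero_or_one_iff a hC).2 hcol
    have hRP := (rowPS_nonneg_iff a hR).2 hrow
    exact ⟨⟨entry_eq_zero_or_one_or_neg_one_of_colPS a hCP, hR, hC, hCP, hRP⟩,
      (magog_special_iff a hR hC hCP hRP).2 hspec⟩
  · rintro ⟨⟨-, hR, hC, hCP, hRP⟩, hspec⟩
    exact ⟨(cornerSum_last_iff a).2 ⟨hR, hC⟩, (colPS_eq_zero_or_one_iff a hC).1 hCP,
      (rowPS_nonneg_iff a hR).1 hRP, (magog_special_iff a hR hC hCP hRP).1 hspec⟩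

end Magog

/-- The map sending an `n × n` magog matrix to its corner-sum matrix is a bijection
from `n × n` magog matrices to magog corner-sum matrices of order `n`. -/
theorem magog_to_cornerSum_bijective (n : ℕ) :
    Set.BijOn cornerOf {a | IsMagog n a} {c | IsMagogCSM n c} := by
  refine ⟨fun a ha => (isMagogCSM_cornerOf_iff a).2 ha, cornerOf_injective.injOn, ?_⟩
  intro c hc
  have hcorner := cornerOf_diffMatrix hc.1
  exact ⟨diffMatrix c, (isMagogCSM_cornerOf_iff _).1 (by rwa [hcorner]), hcorner⟩
end

section
/- The permutation matrix of a permutation σ of {1,...,n} is a magog matrix if and only if σ is 132-avoiding, i.e., there are no indices i < j < k with σ(i) < σ(k) < σ(j). -/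
open Finset

/-- The permutation matrix of a permutation `σ`. -/
def permMat {n : ℕ} (σ : Equiv.Perm (Fin n)) : Matrix (Fin n) (Fin n) ℤ :=
  fun i j => if j = σ i then 1 else 0

/-!
For a permutation matrix every partial row or column sum is an indicator, and the special
inequality at row `r` and column `v` fails exactly when `σ⁻¹ v < r < σ⁻¹ (v + 1)` and
`v + 1 < σ r`, i.e. when `σ⁻¹ v, r, σ⁻¹ (v + 1)` is an occurrence of 132 whose outer values
are adjacent. Any occurrence `i < j < k` of 132 yields one of these: walk the value `σ i`
up towards `σ k` while its position stays left of `j`; the first time it jumps past `j`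
gives an adjacent occurrence.
-/

namespace Equiv.Perm

variable {n : ℕ} (σ : Equiv.Perm (Fin n))

lemma exists_adjacent_132 {i j k : Fin n} (hij : i < j) (hjk : j < k) (hik : σ i < σ k)
    (hkj : σ k < σ j) :
    ∃ v w : Fin n, (w : ℕ) = v + 1 ∧ σ.symm v < j ∧ j < σ.symm w ∧ w < σ j := by
  obtain ⟨d, hd⟩ : ∃ d, (σ i : ℕ) + d = σ k := ⟨_, Nat.add_sub_cancel' hik.le⟩
  clear hik
  rw [Fin.lt_def] at hkj
  induction d generalizing i with
  | zero => exact ((hij.trans hjk).ne (σ.injective (Fin.ext hd))).elim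
  | succ d ih =>
    set w : Fin n := ⟨σ i + 1, by omega⟩
    have hσw : σ (σ.symm w) = w := σ.apply_symm_apply w
    rcases lt_trichotomy (σ.symm w) j with hwj | hwj | hjw
    · exact ih hwj (by rw [hσw]; simp only [w]; omega)
    · rw [← hwj, hσw] at hkj; simp only [w] at hkj; omega
    · exact ⟨σ i, w, rfl, by simpa, hjw, Fin.lt_def.2 (by simp only [w]; omega)⟩

lemma exists_132_iff_exists_adjacent :
    (∃ i j k : Fin n, i < j ∧ j < k ∧ σ i < σ k ∧ σ k < σ j) ↔
      ∃ r v w : Fin n, (w : ℕ) = v + 1 ∧ σ.symm v < r ∧ r < σ.symm w ∧ w < σ r := by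
  constructor
  · rintro ⟨i, j, k, hij, hjk, hik, hkj⟩
    exact ⟨j, σ.exists_adjacent_132 hij hjk hik hkj⟩
  · rintro ⟨r, v, w, hw, hvr, hrw, hwr⟩
    refine ⟨σ.symm v, r, σ.symm w, hvr, hrw, ?_, by simpa⟩
    simp [Fin.lt_def, hw]

end Equiv.Perm

section permMat

variable {n : ℕ} (σ : Equiv.Perm (Fin n))

lemma permMat_apply_eq_ite_symm (i j : Fin n) :
    permMat σ i j = if i = σ.symm j then 1 else 0 := by
  simp only [permMat, Equiv.eq_symm_apply, eq_comm]

lemma rowPS_permMat (i : Fin n) (j : ℕ) :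
    rowPS (permMat σ) i j = if (σ i : ℕ) < j then 1 else 0 := by
  simp [rowPS, permMat]

lemma colPS_permMat (i : ℕ) (j : Fin n) :
    colPS (permMat σ) i j = if (σ.symm j : ℕ) < i then 1 else 0 := by
  simp [colPS, permMat_apply_eq_ite_symm]

lemma permMat_isSquareSign : IsSquareSign n (permMat σ) := by
  refine ⟨fun i j => ?_, fun i => ?_, fun j => ?_, fun i j => ?_, fun i j => ?_⟩
  · unfold permMat; split_ifs <;> simp
  · simp [permMat]
  · simp [permMat_apply_eq_ite_symm]
  · rw [colPS_permMat]; split_ifs <;> simp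
  · rw [rowPS_permMat]; split_ifs <;> simp

lemma magog_ineq_permMat_lt_zero_iff (r v w : Fin n) :
    rowPS (permMat σ) r w + colPS (permMat σ) (r + 1) w - colPS (permMat σ) r v < 0 ↔
      σ.symm v < r ∧ r < σ.symm w ∧ w < σ r := by
  have hne : σ r = w → σ.symm w = r := fun h => by rw [← h, Equiv.symm_apply_apply]
  rw [rowPS_permMat, colPS_permMat, colPS_permMat]
  simp only [Fin.lt_def, Fin.ext_iff] at hne ⊢
  split_ifs <;> omega

end permMat

lemma IsMagog.special_ineq {n : ℕ} {a : Matrix (Fin n) (Fin n) ℤ} (h : IsMagog n a)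
    {r v w : Fin n} (hr : 0 < (r : ℕ)) (hrn : (r : ℕ) + 1 < n) (hw : (w : ℕ) = v + 1)
    (hwn : (w : ℕ) + 1 < n) :
    0 ≤ rowPS a r w + colPS a (r + 1) w - colPS a r v := by
  obtain ⟨_ | i, _⟩ := r
  · exact (lt_irrefl 0 hr).elim
  obtain ⟨w, _⟩ := w
  subst hw
  exact h.2 i v (by omega) (by omega)

/-- The permutation matrix of `σ` is a magog matrix iff `σ` is 132-avoiding:
there are no indices `i < j < k` with `σ i < σ k < σ j`. -/
theorem permMat_isMagog_iff_avoids_132 (n : ℕ) (σ : Equiv.Perm (Fin n)) :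
    IsMagog n (permMat σ) ↔
      ¬ ∃ i j k : Fin n, i < j ∧ j < k ∧ σ i < σ k ∧ σ k < σ j := by
  rw [σ.exists_132_iff_exists_adjacent]
  constructor
  · rintro hmagog ⟨r, v, w, hw, hvr, hrw, hwr⟩
    have hr : 0 < (r : ℕ) := (Nat.zero_le _).trans_lt hvr
    have hrn : (r : ℕ) + 1 < n := by have := (σ.symm w).isLt; rw [Fin.lt_def] at hrw; omega
    have hwn : (w : ℕ) + 1 < n := by have := (σ r).isLt; rw [Fin.lt_def] at hwr; omega
    exact (hmagog.special_ineq hr hrn hw hwn).not_gt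
      ((magog_ineq_permMat_lt_zero_iff σ r v w).2 ⟨hvr, hrw, hwr⟩)
  · refine fun hav => ⟨permMat_isSquareSign σ, fun i j hi hj => ?_⟩
    by_contra! hneg
    exact hav ⟨_, _, _, rfl,
      (magog_ineq_permMat_lt_zero_iff σ ⟨i + 1, by omega⟩ ⟨j, by omega⟩ ⟨j + 1, by omega⟩).1 hneg⟩
end

section
/- Let (c_{i,j})_{0≤i,j≤n} be a magog corner-sum matrix of order n and define a_{i,j} = c_{i,j} − c_{i−1,j} − c_{i,j−1} + c_{i−1,j−1} for 1 ≤ i,j ≤ n. Then (a_{i,j}) is a magog matrix of order n, and its corner sums recover (c_{i,j}). -/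
open Finset

/-!
Because `c` vanishes on its top row and left column, the partial row and column sums of the
second-difference matrix `a` telescope: through column `j`, row `i` of `a` sums to
`c_{i,j} - c_{i-1,j}`, and through row `i`, column `j` sums to `c_{i,j} - c_{i,j-1}`. Summing
once more recovers `c`, and each magog condition on `a` becomes an axiom on `c`: steps along a
row in `{0, 1}`, monotonicity down a column, the values on the last row and column, and the
convexity inequality `2 c_{i,j} ≤ c_{i+1,j+1} + c_{i,j-1}`, which is exactly the magog inequality.
-/

namespace Fin

theorem clamp_of_le {n m : ℕ} (h : n ≤ m) : clamp n m = ⟨n, by omega⟩ := by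
  ext
  simp [clamp, h]

theorem clamp_val_self {n : ℕ} (i : Fin (n + 1)) : clamp i n = i :=
  (clamp_of_le i.is_le).trans (i.eta _)

theorem sum_filter_lt_succ_sub_castSucc {M : Type*} [AddCommGroup M] {n : ℕ}
    (f : Fin (n + 1) → M) (j : ℕ) :
    ∑ k ∈ univ.filter (fun k : Fin n => (k : ℕ) < j), (f k.succ - f k.castSucc) =
      f (clamp j n) - f 0 := by
  induction j with
  | zero => simp [clamp]
  | succ j ih =>
    by_cases hj : j < n
    · have hset : univ.filter (fun k : Fin n => (k : ℕ) < j + 1) =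
          insert ⟨j, hj⟩ (univ.filter (fun k : Fin n => (k : ℕ) < j)) := by
        ext k
        simp only [Order.lt_add_one_iff, mem_filter, mem_univ, true_and, mem_insert, Fin.ext_iff]
        omega
      rw [hset, sum_insert (by simp), ih, clamp_of_le (by omega : j + 1 ≤ n),
        clamp_of_le hj.le]
      simp
    · have hset : univ.filter (fun k : Fin n => (k : ℕ) < j + 1) =
          univ.filter (fun k : Fin n => (k : ℕ) < j) := by
        ext k
        simp only [Order.lt_add_one_iff, mem_filter, mem_univ, true_and]
        omega
      rw [hset, ih, clamp_eq_last _ _ (by omega), clamp_eq_last _ _ (by omega)]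

end Fin

theorem rowPS_self {n : ℕ} (a : Matrix (Fin n) (Fin n) ℤ) (i : Fin n) :
    rowPS a i n = ∑ j, a i j := by
  rw [rowPS, filter_true_of_mem fun j _ => j.isLt]

theorem colPS_self {n : ℕ} (a : Matrix (Fin n) (Fin n) ℤ) (j : Fin n) :
    colPS a n j = ∑ i, a i j := by
  rw [colPS, filter_true_of_mem fun i _ => i.isLt]

def secondDiff {n : ℕ} (c : Fin (n + 1) → Fin (n + 1) → ℤ) : Matrix (Fin n) (Fin n) ℤ :=
  fun i j => c i.succ j.succ - c i.castSucc j.succ - c i.succ j.castSucc + c i.castSucc j.castSucc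

section SecondDiff

variable {n : ℕ} (c : Fin (n + 1) → Fin (n + 1) → ℤ)

theorem rowPS_secondDiff (h0 : ∀ i, c i 0 = 0) (i : Fin n) (j : ℕ) :
    rowPS (secondDiff c) i j = c i.succ (Fin.clamp j n) - c i.castSucc (Fin.clamp j n) := by
  have h := Fin.sum_filter_lt_succ_sub_castSucc (fun k => c i.succ k - c i.castSucc k) j
  rw [h0, h0, sub_zero, sub_zero] at h
  rw [← h, rowPS]
  exact sum_congr rfl fun k _ => by rw [secondDiff]; ring

theorem colPS_secondDiff (h0 : ∀ j, c 0 j = 0) (i : ℕ) (j : Fin n) :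
    colPS (secondDiff c) i j = c (Fin.clamp i n) j.succ - c (Fin.clamp i n) j.castSucc := by
  have h := Fin.sum_filter_lt_succ_sub_castSucc (fun k => c k j.succ - c k j.castSucc) i
  rw [h0, h0, sub_zero, sub_zero] at h
  rw [← h, colPS]
  exact sum_congr rfl fun k _ => by rw [secondDiff]; ring

theorem cornerOf_secondDiff (hrow : ∀ i, c i 0 = 0) (hcol : ∀ j, c 0 j = 0) :
    cornerOf (secondDiff c) = c := by
  funext i j
  have h := Fin.sum_filter_lt_succ_sub_castSucc (fun k => c k j) i
  rw [Fin.clamp_val_self, hcol, sub_zero] at h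
  rw [← h]
  refine sum_congr rfl fun k _ => ?_
  rw [← Fin.clamp_val_self j, ← rowPS_secondDiff c hrow, Fin.clamp_val_self]
  rfl

end SecondDiff

namespace IsMagogCSM

variable {n : ℕ} {c : Fin (n + 1) → Fin (n + 1) → ℤ}

theorem row_zero (hc : IsMagogCSM n c) (k : Fin (n + 1)) : c 0 k = 0 := (hc.1 k).1

theorem col_zero (hc : IsMagogCSM n c) (k : Fin (n + 1)) : c k 0 = 0 := (hc.1 k).2

theorem row_last (hc : IsMagogCSM n c) (k : Fin (n + 1)) : c (Fin.last n) k = k := (hc.2.1 k).1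

theorem col_last (hc : IsMagogCSM n c) (k : Fin (n + 1)) : c k (Fin.last n) = k := (hc.2.1 k).2

theorem succ_sub_castSucc_mem (hc : IsMagogCSM n c) (i : Fin (n + 1)) (j : Fin n) :
    c i j.succ - c i j.castSucc = 0 ∨ c i j.succ - c i j.castSucc = 1 :=
  hc.2.2.1 i j j.isLt

theorem castSucc_le_succ (hc : IsMagogCSM n c) (i : Fin n) (j : Fin (n + 1)) :
    c i.castSucc j ≤ c i.succ j :=
  hc.2.2.2.1 i i.isLt j

theorem isSquareSign_secondDiff (hc : IsMagogCSM n c) : IsSquareSign n (secondDiff c) := by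
  have hrow := rowPS_secondDiff c hc.col_zero
  have hcol := colPS_secondDiff c hc.row_zero
  refine ⟨fun i j => ?_, fun i => ?_, fun j => ?_, fun i j => ?_, fun i j => ?_⟩
  · have := hc.succ_sub_castSucc_mem i.succ j
    have := hc.succ_sub_castSucc_mem i.castSucc j
    rw [secondDiff]
    omega
  · rw [← rowPS_self, hrow, Fin.clamp_eq_last _ _ le_rfl, hc.col_last, hc.col_last]
    simp
  · rw [← colPS_self, hcol, Fin.clamp_eq_last _ _ le_rfl, hc.row_last, hc.row_last]
    simp
  · rw [hcol]
    exact hc.succ_sub_castSucc_mem _ j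
  · rw [hrow, sub_nonneg]
    exact hc.castSucc_le_succ i _

theorem magog_ineq_secondDiff (hc : IsMagogCSM n c) (i j : ℕ) (hi : i + 2 < n)
    (hj : j + 2 < n) :
    0 ≤ rowPS (secondDiff c) ⟨i + 1, by omega⟩ (j + 1) +
        colPS (secondDiff c) (i + 2) ⟨j + 1, by omega⟩ -
          colPS (secondDiff c) (i + 1) ⟨j, by omega⟩ := by
  rw [rowPS_secondDiff c hc.col_zero, colPS_secondDiff c hc.row_zero,
    colPS_secondDiff c hc.row_zero, Fin.clamp_of_le (by omega : j + 1 ≤ n),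
    Fin.clamp_of_le (by omega : i + 2 ≤ n), Fin.clamp_of_le (by omega : i + 1 ≤ n)]
  simp only [Fin.succ_mk, Fin.castSucc_mk]
  linarith [hc.2.2.2.2 i j (by omega) (by omega)]

end IsMagogCSM

/-- Given a magog corner-sum matrix `c` of order `n`, the matrix of second
differences `a_{i,j} = c_{i,j} - c_{i-1,j} - c_{i,j-1} + c_{i-1,j-1}`
(1-indexed) is a magog matrix of order `n`, and its corner sums recover `c`. -/
theorem cornerSum_inverse (n : ℕ) (c : Fin (n + 1) → Fin (n + 1) → ℤ)
    (hc : IsMagogCSM n c) :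
    IsMagog n (fun i j : Fin n =>
      c i.succ j.succ - c i.castSucc j.succ - c i.succ j.castSucc +
        c i.castSucc j.castSucc) ∧
    cornerOf (fun i j : Fin n =>
      c i.succ j.succ - c i.castSucc j.succ - c i.succ j.castSucc +
        c i.castSucc j.castSucc) = c :=
  ⟨⟨hc.isSquareSign_secondDiff, hc.magog_ineq_secondDiff⟩,
    cornerOf_secondDiff c hc.col_zero hc.row_zero⟩
end
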